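/- Let L be an autonomous Tonelli Lagrangian on a compact manifold M. Then for every c ∈ H¹(M,ℝ), the subspace R(c) = V(𝓖(c))^⊥ is contained in E(c) = V(𝓐(c))^⊥, and (using Massart's theorem that E(c) ⊂ VF(c)) R(c) ⊂ VF(c), the direction space of the maximal flat of Mather's α function containing c in its relative interior. Hence every admissible curve of cohomology classes is contained in a single flat of α, and every C-equivalence class is contained in a flat. -/

import Mathlib

/-!
Take an affine function `ℓ ≤ α` touching `α` at `c(0)` (Hahn–Banach applied to the open strict
epigraph). Its contact set `{α = ℓ}` is a flat. At a contact point `c`, the function `α - ℓ` is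
affine, nonnegative and zero at `c` on every flat having `c` in its relative interior, so it
vanishes on small two-sided segments through `c` in every direction of `VF(c)`; as `VF(c)` is
finite dimensional, the contact set contains a neighbourhood of `c` in `c + VF(c)`. Since
`R(c) ⊂ E(c) ⊂ VF(c)`, the set of times an admissible curve spends in the contact set is open;
it is also closed and contains `0`, hence is all of `ℝ`.
-/

open Set Filter

noncomputable section

variable {H : Type*} [NormedAddCommGroup H] [NormedSpace ℝ H]

/-- The annihilator `S^⊥` of a subspace of `H₁(M,ℝ)` inside `H¹(M,ℝ)`,
identified with the continuous dual of `H₁(M,ℝ)`. -/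
def ann (S : Submodule ℝ H) : Submodule ℝ (H →L[ℝ] ℝ) where
  carrier := { f | ∀ v ∈ S, f v = 0 }
  add_mem' := by intro f g hf hg v hv; simp [hf v hv, hg v hv]
  zero_mem' := by intro v hv; simp
  smul_mem' := by intro a f hf v hv; simp [hf v hv]

/-- `V(A) = ⋂ { i_{U*} H₁(U,ℝ) : U ⊇ A open }`, where `W U` is the image of the
map induced on first homology by the inclusion of the open set `U`. -/
def VA {M : Type*} [TopologicalSpace M] (W : Set M → Submodule ℝ H) (A : Set M) :
    Submodule ℝ H :=
  ⨅ U ∈ { U : Set M | IsOpen U ∧ A ⊆ U }, W U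

/-- A flat of `α`: a closed convex set on which `α` is affine. -/
def IsFlat (α : (H →L[ℝ] ℝ) → ℝ) (K : Set (H →L[ℝ] ℝ)) : Prop :=
  IsClosed K ∧ Convex ℝ K ∧
    ∃ (l : (H →L[ℝ] ℝ) →ₗ[ℝ] ℝ) (r : ℝ), ∀ x ∈ K, α x = l x + r

/-- The direction space `Vect(K - K)` of a convex set. -/
def flatSpan (K : Set (H →L[ℝ] ℝ)) : Submodule ℝ (H →L[ℝ] ℝ) :=
  Submodule.span ℝ { v | ∃ x ∈ K, ∃ y ∈ K, v = x - y }

/-- `c` lies in the relative interior of `K`. -/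
def InRelInterior (c : H →L[ℝ] ℝ) (K : Set (H →L[ℝ] ℝ)) : Prop :=
  ∃ ε > 0, ∀ v ∈ (flatSpan K : Set (H →L[ℝ] ℝ)), ‖v‖ < ε → c + v ∈ K

/-- The direction space `VF(c)` of the maximal flat `F(c)` of `α` containing `c`
in its relative interior. -/
def VF (α : (H →L[ℝ] ℝ) → ℝ) (c : H →L[ℝ] ℝ) : Submodule ℝ (H →L[ℝ] ℝ) :=
  flatSpan (⋃₀ { K | IsFlat α K ∧ InRelInterior c K })

/-- An admissible curve of cohomology classes: locally, `c(t) - c(t₀)` stays in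
the subspace `R(c(t₀))` of allowed directions. -/
def Admissible (R : (H →L[ℝ] ℝ) → Submodule ℝ (H →L[ℝ] ℝ))
    (cc : ℝ → H →L[ℝ] ℝ) : Prop :=
  Continuous cc ∧ ∀ t₀ : ℝ, ∃ δ > 0, ∀ t ∈ Icc (t₀ - δ) (t₀ + δ),
    cc t - cc t₀ ∈ R (cc t₀)

/-- C-equivalence of two cohomology classes. -/
def CEquiv (R : (H →L[ℝ] ℝ) → Submodule ℝ (H →L[ℝ] ℝ)) (c₀ c₁ : H →L[ℝ] ℝ) :
    Prop :=
  ∃ cc : ℝ → H →L[ℝ] ℝ, Admissible R cc ∧ cc 0 = c₀ ∧ cc 1 = c₁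

open Topology

section ConvexGeometry

variable {E : Type*} [NormedAddCommGroup E] [NormedSpace ℝ E]

theorem Convex.mem_nhds_zero_of_absorbent [FiniteDimensional ℝ E] {s : Set E}
    (hs : Convex ℝ s) (habs : Absorbent ℝ s) : s ∈ 𝓝 (0 : E) := by
  have hgauge : ConvexOn ℝ univ (gauge s) := by
    refine ⟨convex_univ, fun x _ y _ a b ha hb _ => ?_⟩
    calc gauge s (a • x + b • y) ≤ gauge s (a • x) + gauge s (b • y) := gauge_add_le hs habs _ _
      _ = a • gauge s x + b • gauge s y := by
        rw [gauge_smul_of_nonneg ha, gauge_smul_of_nonneg hb]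
  have hopen : IsOpen {x | gauge s x < 1} :=
    isOpen_lt (continuousOn_univ.1 (hgauge.continuousOn isOpen_univ)) continuous_const
  exact mem_of_superset (hopen.mem_nhds (by simp only [mem_ofPred_eq, gauge_zero, zero_lt_one]))
    (setOfPred_gauge_lt_one_subset_self hs habs.zero_mem habs)

def Convex.twoSidedDirections {C : Set E} (hC : Convex ℝ C) {c : E} (hc : c ∈ C) :
    Submodule ℝ E where
  carrier := {v | ∀ᶠ s in 𝓝 (0 : ℝ), c + s • v ∈ C}
  zero_mem' := by simp [hc]
  smul_mem' a v hv := by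
    have hlim : Tendsto (fun s : ℝ => s * a) (𝓝 0) (𝓝 0) := by
      simpa using (continuous_mul_const a).tendsto 0
    filter_upwards [hlim.eventually hv] with s hs
    rwa [smul_smul]
  add_mem' {v w} hv hw := by
    have hlim : Tendsto (fun s : ℝ => 2 * s) (𝓝 0) (𝓝 0) := by
      simpa using (continuous_const_mul (2 : ℝ)).tendsto 0
    filter_upwards [hlim.eventually hv, hlim.eventually hw] with s hsv hsw
    have hmid := hC hsv hsw (by norm_num : (0 : ℝ) ≤ 1 / 2) (by norm_num : (0 : ℝ) ≤ 1 / 2)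
      (by norm_num)
    convert hmid using 1
    module

theorem Convex.exists_pos_forall_norm_lt_add_mem {C : Set E} (hC : Convex ℝ C) {c : E}
    (hc : c ∈ C) {V : Submodule ℝ E} [FiniteDimensional ℝ V]
    (hV : V ≤ hC.twoSidedDirections hc) :
    ∃ ε > 0, ∀ v ∈ V, ‖v‖ < ε → c + v ∈ C := by
  set S : Set V := {u | c + (u : E) ∈ C}
  have hS : Convex ℝ S := (hC.translate_preimage_right c).linear_preimage V.subtype
  have habs : Absorbent ℝ S :=
    absorbent_iff_eventually_nhdsNE_zero.2 fun u => nhdsWithin_le_nhds (hV u.2 :)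
  obtain ⟨ε, hε, hball⟩ := Metric.mem_nhds_iff.1 (hS.mem_nhds_zero_of_absorbent habs)
  exact ⟨ε, hε, fun v hv hvε => hball (a := ⟨v, hv⟩) (by simpa using hvε)⟩

theorem ConvexOn.exists_affine_le_eq {f : E → ℝ} (hf : ConvexOn ℝ univ f) (hcont : Continuous f)
    (c : E) : ∃ (l : StrongDual ℝ E) (r : ℝ), (∀ x, l x + r ≤ f x) ∧ f c = l c + r := by
  have hepi : Convex ℝ {p : E × ℝ | f p.1 < p.2} := by
    simpa using hf.convex_strict_epigraph
  obtain ⟨φ, hφ⟩ := geometric_hahn_banach_open_point hepi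
    (isOpen_lt (hcont.comp continuous_fst) continuous_snd) (x := (c, f c)) (lt_irrefl (f c))
  set u : StrongDual ℝ E := φ.comp (ContinuousLinearMap.inl ℝ E ℝ)
  set μ := -φ (0, 1)
  have hφ_apply (x : E) (t : ℝ) : φ (x, t) = u x - t * μ := by
    have : ((x, t) : E × ℝ) = (x, 0) + t • (0, 1) := by simp
    rw [this, map_add, map_smul, smul_eq_mul]
    simp [u, μ]
  have hμ : 0 < μ := by
    have := hφ (c, f c + 1) (by simp)
    rw [hφ_apply, hφ_apply] at this
    linarith
  have hsupport (x : E) : u x - u c + f c * μ ≤ f x * μ := by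
    refine le_of_forall_pos_lt_add fun ε hε => ?_
    have := hφ (x, f x + ε / μ) (by simpa using div_pos hε hμ)
    rw [hφ_apply, hφ_apply, add_mul, div_mul_cancel₀ _ hμ.ne'] at this
    linarith
  refine ⟨μ⁻¹ • u, f c - μ⁻¹ * u c, fun x => ?_, by simp⟩
  calc (μ⁻¹ • u) x + (f c - μ⁻¹ * u c) = (u x - u c + f c * μ) / μ := by
        simp only [smul_apply, smul_eq_mul]
        field_simp
        ring
    _ ≤ f x := (div_le_iff₀ hμ).2 (hsupport x)

end ConvexGeometry

section Flats

variable {α : (H →L[ℝ] ℝ) → ℝ} {c : H →L[ℝ] ℝ} {K : Set (H →L[ℝ] ℝ)}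

theorem ann_anti {S T : Submodule ℝ H} (hST : S ≤ T) : ann T ≤ ann S :=
  fun _ hf v hv => hf v (hST hv)

theorem VA_mono {M : Type*} [TopologicalSpace M] (W : Set M → Submodule ℝ H) {A B : Set M}
    (hAB : A ⊆ B) : VA W A ≤ VA W B :=
  le_iInf₂ fun U hU => iInf₂_le U ⟨hU.1, hAB.trans hU.2⟩

theorem InRelInterior.mem (h : InRelInterior c K) : c ∈ K := by
  obtain ⟨ε, hε, hK⟩ := h
  simpa using hK 0 (zero_mem _) (by simpa using hε)

theorem InRelInterior.eventually_add_smul_mem (h : InRelInterior c K) {v : H →L[ℝ] ℝ}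
    (hv : v ∈ flatSpan K) : ∀ᶠ s in 𝓝 (0 : ℝ), c + s • v ∈ K := by
  obtain ⟨ε, hε, hK⟩ := h
  have hlim : Tendsto (fun s : ℝ => s • v) (𝓝 0) (𝓝 0) := by
    simpa using (tendsto_id (x := 𝓝 (0 : ℝ))).smul_const v
  filter_upwards [hlim.eventually (Metric.ball_mem_nhds 0 hε)] with s hs
  exact hK _ (Submodule.smul_mem _ s hv) (by simpa using hs)

variable {l : StrongDual ℝ (H →L[ℝ] ℝ)} {r : ℝ}

theorem isFlat_contactSet (hα : ConvexOn ℝ univ α) (hcont : Continuous α)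
    (hl : ∀ x, l x + r ≤ α x) : IsFlat α {x | α x = l x + r} := by
  refine ⟨isClosed_eq hcont (l.continuous.add continuous_const), ?_, l.toLinearMap, r,
    fun x hx => hx⟩
  intro x hx y hy a b ha hb hab
  refine le_antisymm ?_ (hl _)
  calc α (a • x + b • y) ≤ a • α x + b • α y := hα.2 trivial trivial ha hb hab
    _ = l (a • x + b • y) + r := by
      rw [smul_eq_mul, smul_eq_mul, hx.out, hy.out, map_add, map_smul, map_smul,
        smul_eq_mul, smul_eq_mul]
      linear_combination r * hab

/-- Along a flat through `c`, `α` minus the supporting affine function is affine, nonnegative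
and zero at `c`; it therefore vanishes near `c` on every line of the flat through `c`. -/
theorem IsFlat.sub_mem_twoSidedDirections (hK : IsFlat α K) (hcK : InRelInterior c K)
    (hl : ∀ x, l x + r ≤ α x) (hC : Convex ℝ {x | α x = l x + r})
    (hc : c ∈ {x | α x = l x + r}) {x : H →L[ℝ] ℝ} (hx : x ∈ K) :
    x - c ∈ hC.twoSidedDirections hc := by
  obtain ⟨-, -, l', r', hαK⟩ := hK
  have hv : x - c ∈ flatSpan K := Submodule.subset_span ⟨x, hx, c, hcK.mem, rfl⟩
  filter_upwards [hcK.eventually_add_smul_mem hv, hcK.eventually_add_smul_mem (neg_mem hv)]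
    with s hyp hym
  set yp := c + s • (x - c)
  set ym := c + s • -(x - c)
  have hsum : yp + ym = c + c := by simp only [yp, ym]; module
  have hl_sum : l yp + l ym = l c + l c := by rw [← map_add, ← map_add, hsum]
  have hl'_sum : l' yp + l' ym = l' c + l' c := by rw [← map_add, ← map_add, hsum]
  show α yp = l yp + r
  linarith [hαK _ hyp, hαK _ hym, hαK _ hcK.mem, hl yp, hl ym, hc.out]

theorem VF_le_twoSidedDirections (hl : ∀ x, l x + r ≤ α x)
    (hC : Convex ℝ {x | α x = l x + r}) (hc : c ∈ {x | α x = l x + r}) :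
    VF α c ≤ hC.twoSidedDirections hc := by
  refine Submodule.span_le.2 ?_
  rintro _ ⟨x, ⟨K, ⟨hK, hcK⟩, hx⟩, y, ⟨K', ⟨hK', hcK'⟩, hy⟩, rfl⟩
  rw [← sub_sub_sub_cancel_right x y c]
  exact sub_mem (hK.sub_mem_twoSidedDirections hcK hl hC hc hx)
    (hK'.sub_mem_twoSidedDirections hcK' hl hC hc hy)

theorem exists_pos_forall_norm_lt_add_mem_contactSet [FiniteDimensional ℝ H]
    (hα : ConvexOn ℝ univ α) (hcont : Continuous α) (hl : ∀ x, l x + r ≤ α x)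
    (hc : c ∈ {x | α x = l x + r}) :
    ∃ ε > 0, ∀ v ∈ VF α c, ‖v‖ < ε → c + v ∈ {x | α x = l x + r} :=
  have hC := (isFlat_contactSet hα hcont hl).2.1
  hC.exists_pos_forall_norm_lt_add_mem hc (VF_le_twoSidedDirections hl hC hc)

variable {R : (H →L[ℝ] ℝ) → Submodule ℝ (H →L[ℝ] ℝ)} {cc : ℝ → H →L[ℝ] ℝ}

theorem Admissible.range_subset (hcc : Admissible R cc) {C : Set (H →L[ℝ] ℝ)} (hC : IsClosed C)
    (hR : ∀ c ∈ C, ∃ ε > 0, ∀ v ∈ R c, ‖v‖ < ε → c + v ∈ C) (h0 : cc 0 ∈ C) :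
    range cc ⊆ C := by
  have hopen : IsOpen (cc ⁻¹' C) := by
    refine isOpen_iff_mem_nhds.2 fun t₀ ht₀ => ?_
    obtain ⟨ε, hε, hball⟩ := hR _ ht₀
    obtain ⟨δ, hδ, hloc⟩ := hcc.2 t₀
    have hnear : ∀ᶠ t in 𝓝 t₀, ‖cc t - cc t₀‖ < ε := by
      simpa [dist_eq_norm] using (hcc.1.tendsto t₀).eventually (Metric.ball_mem_nhds _ hε)
    filter_upwards [hnear, Icc_mem_nhds (by linarith : t₀ - δ < t₀) (by linarith : t₀ < t₀ + δ)]
      with t hεt hδt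
    simpa using hball _ (hloc t hδt) hεt
  rintro _ ⟨t, rfl⟩
  show t ∈ cc ⁻¹' C
  rw [IsClopen.eq_univ ⟨hC.preimage hcc.1, hopen⟩ ⟨0, h0⟩]
  trivial

theorem Admissible.exists_isFlat_range_subset [FiniteDimensional ℝ H] (hα : ConvexOn ℝ univ α)
    (hR : ∀ c, R c ≤ VF α c) (hcc : Admissible R cc) : ∃ K, IsFlat α K ∧ range cc ⊆ K := by
  have hcont : Continuous α := continuousOn_univ.1 (hα.continuousOn isOpen_univ)
  obtain ⟨l, r, hl, h0⟩ := hα.exists_affine_le_eq hcont (cc 0)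
  have hflat := isFlat_contactSet hα hcont hl
  refine ⟨_, hflat, hcc.range_subset hflat.1 (fun c hc => ?_) h0⟩
  obtain ⟨ε, hε, hfat⟩ := exists_pos_forall_norm_lt_add_mem_contactSet hα hcont hl hc
  exact ⟨ε, hε, fun v hv => hfat v (hR c hv)⟩

theorem CEquiv.exists_isFlat [FiniteDimensional ℝ H] (hα : ConvexOn ℝ univ α)
    (hR : ∀ c, R c ≤ VF α c) {c₀ c₁ : H →L[ℝ] ℝ} (h : CEquiv R c₀ c₁) :
    ∃ K, IsFlat α K ∧ c₀ ∈ K ∧ c₁ ∈ K := by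
  obtain ⟨cc, hcc, rfl, rfl⟩ := h
  obtain ⟨K, hK, hrange⟩ := hcc.exists_isFlat_range_subset hα hR
  exact ⟨K, hK, hrange ⟨0, rfl⟩, hrange ⟨1, rfl⟩⟩

end Flats

/-- Here `H` stands for `H₁(M,ℝ)`, `W U` for the image of `H₁(U,ℝ)` in `H₁(M,ℝ)`, `𝒜 c` and
`𝒢 c` for the projected Aubry set and the set of minimizing points of `L - η`, `[η] = c`, and
`α` for Mather's `α` function. -/
theorem autonomous_R_in_flat_general [FiniteDimensional ℝ H]
    {M : Type*} [TopologicalSpace M]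
    (W : Set M → Submodule ℝ H)
    (𝒜 𝒢 : (H →L[ℝ] ℝ) → Set M) (h𝒜𝒢 : ∀ c, 𝒜 c ⊆ 𝒢 c)
    (α : (H →L[ℝ] ℝ) → ℝ) (hconv : ConvexOn ℝ Set.univ α)
    (hMassart : ∀ c, ann (VA W (𝒜 c)) ≤ VF α c) :
    (∀ c, ann (VA W (𝒢 c)) ≤ ann (VA W (𝒜 c))) ∧
    (∀ c, ann (VA W (𝒢 c)) ≤ VF α c) ∧
    (∀ cc : ℝ → H →L[ℝ] ℝ, Admissible (fun c => ann (VA W (𝒢 c))) cc →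
      ∃ K : Set (H →L[ℝ] ℝ), IsFlat α K ∧ Set.range cc ⊆ K) ∧
    (∀ c₀ c₁ : H →L[ℝ] ℝ, CEquiv (fun c => ann (VA W (𝒢 c))) c₀ c₁ →
      ∃ K : Set (H →L[ℝ] ℝ), IsFlat α K ∧ c₀ ∈ K ∧ c₁ ∈ K) := by
  have hRE : ∀ c, ann (VA W (𝒢 c)) ≤ ann (VA W (𝒜 c)) := fun c => ann_anti (VA_mono W (h𝒜𝒢 c))
  have hRVF : ∀ c, ann (VA W (𝒢 c)) ≤ VF α c := fun c => (hRE c).trans (hMassart c)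
  exact ⟨hRE, hRVF, fun _ hcc => hcc.exists_isFlat_range_subset hconv hRVF,
    fun _ _ h => h.exists_isFlat hconv hRVF⟩

/-- in the autonomous case, `R(c) = V(𝓖(c))^⊥ ⊂ E(c) = V(𝓐(c))^⊥`,
and by Massart's theorem `E(c) ⊂ VF(c)`, so `R(c) ⊂ VF(c)`; hence every
admissible curve, and every C-equivalence class, is contained in a flat of `α`.
Here `M` is the compact manifold, `H` stands for `H₁(M,ℝ)`, `W U` for the image
of `H₁(U,ℝ)` in `H₁(M,ℝ)`, `𝒜 c` and `𝒢 c` for the projected Aubry set and set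
of minimizing curves of `L - η`, `[η] = c` (for the autonomous Tonelli
Lagrangian `L`, one has `𝒜 c ⊆ 𝒢 c`), and `α` for Mather's convex superlinear
`α` function. -/
theorem autonomous_R_in_flat [FiniteDimensional ℝ H]
    {M : Type*} [TopologicalSpace M] [CompactSpace M]
    (W : Set M → Submodule ℝ H) (hW : ∀ U V : Set M, U ⊆ V → W U ≤ W V)
    (𝒜 𝒢 : (H →L[ℝ] ℝ) → Set M) (h𝒜𝒢 : ∀ c, 𝒜 c ⊆ 𝒢 c)
    (α : (H →L[ℝ] ℝ) → ℝ) (hconv : ConvexOn ℝ Set.univ α)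
    (hsl : ∀ C : ℝ, ∃ R₀ : ℝ, ∀ x : H →L[ℝ] ℝ, R₀ ≤ ‖x‖ → C * ‖x‖ ≤ α x)
    (hMassart : ∀ c, ann (VA W (𝒜 c)) ≤ VF α c) :
    (∀ c, ann (VA W (𝒢 c)) ≤ ann (VA W (𝒜 c))) ∧
    (∀ c, ann (VA W (𝒢 c)) ≤ VF α c) ∧
    (∀ cc : ℝ → H →L[ℝ] ℝ, Admissible (fun c => ann (VA W (𝒢 c))) cc →
      ∃ K : Set (H →L[ℝ] ℝ), IsFlat α K ∧ Set.range cc ⊆ K) ∧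
    (∀ c₀ c₁ : H →L[ℝ] ℝ, CEquiv (fun c => ann (VA W (𝒢 c))) c₀ c₁ →
      ∃ K : Set (H →L[ℝ] ℝ), IsFlat α K ∧ c₀ ∈ K ∧ c₁ ∈ K) :=
  autonomous_R_in_flat_general W 𝒜 𝒢 h𝒜𝒢 α hconv hMassart

end
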